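/- Coefficient bound from values on a uniformly perfect set: For every integer d ≥ 1 and every κ ∈ (0,1) there exists c > 0, depending only on κ and d, such that the following holds. Let ρ ∈ (0,1] with κ < ρ/100, and let K ⊆ (−ρ, ρ) be a κ-uniformly perfect subset of ℝ containing 0. Then for every real polynomial P(z) = Σ_{k=0}^{d} a_k z^k of degree at most d, max_{0 ≤ k ≤ d} |a_k| ≤ c · sup_{z ∈ K} |P(z)|. -/

import Mathlib

/-!
Pick nodes `0 = x₀, x₁, …, x_d` in `K` with `|x_j| ≍ (κ/2)^j`: uniform perfectness at `0` with
scale `σ = (κ/2)^j` provides them. Consecutive scales differ by the factor `κ/2`, so the nodes are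
pairwise `(κ/2)^(d+1)`-separated, and their Vandermonde determinant is bounded below in terms of
`κ` and `d` only. Since `K ⊆ [-1, 1]`, Cramer's rule then bounds the coefficients of `P` by the
values `P(x_j)`.
-/

open Finset Matrix Nat

def IsUniformlyPerfect (κ : ℝ) (K : Set ℝ) : Prop :=
  ∀ σ ∈ Set.Ioo (0 : ℝ) 1, ∀ x ∈ K, ∃ y ∈ K, κ * σ ≤ |x - y| ∧ |x - y| ≤ σ

namespace Matrix

theorem pow_sq_le_abs_det_vandermonde {n : ℕ} {δ : ℝ} (hδ0 : 0 ≤ δ) (hδ1 : δ ≤ 1)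
    {v : Fin n → ℝ} (hv : Pairwise fun i j => δ ≤ |v i - v j|) :
    δ ^ (n ^ 2) ≤ |(vandermonde v).det| := by
  rw [det_vandermonde, abs_prod]
  calc δ ^ (n ^ 2) = ∏ _i : Fin n, δ ^ n := by
        rw [prod_const, Finset.card_univ, Fintype.card_fin, ← pow_mul, sq]
    _ ≤ ∏ i : Fin n, δ ^ #(Ioi i) := by
        refine prod_le_prod (fun _ _ => pow_nonneg hδ0 _) fun i _ => ?_
        exact pow_le_pow_of_le_one hδ0 hδ1 ((card_le_univ _).trans_eq (Fintype.card_fin n))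
    _ = ∏ i : Fin n, ∏ _j ∈ Ioi i, δ := prod_congr rfl fun i _ => (prod_const δ).symm
    _ ≤ ∏ i : Fin n, |∏ j ∈ Ioi i, (v j - v i)| := by
        gcongr with i _
        rw [abs_prod]
        gcongr with j hj
        exact hv (ne_of_gt (mem_Ioi.1 hj))

variable {ι : Type*} [Fintype ι] [DecidableEq ι]

theorem abs_inv_apply_le {A : Matrix ι ι ℝ} (hA : ∀ i j, |A i j| ≤ 1) (i j : ι) :
    |A⁻¹ i j| ≤ (Fintype.card ι)! / |A.det| := by
  rw [inv_def, smul_apply, smul_eq_mul, Ring.inverse_eq_inv', abs_mul, abs_inv, div_eq_inv_mul]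
  gcongr
  rw [adjugate_apply]
  have hrow : ∀ k l, |(A.updateRow j (Pi.single i 1)) k l| ≤ 1 := by
    intro k l
    rw [updateRow_apply]
    split_ifs
    · rw [Pi.single_apply]; split_ifs <;> simp
    · exact hA k l
  simpa using det_le (abv := AbsoluteValue.abs) hrow

theorem abs_le_of_abs_mulVec_le {A : Matrix ι ι ℝ} (hdet : IsUnit A.det)
    (hA : ∀ i j, |A i j| ≤ 1) {a : ι → ℝ} {M : ℝ} (hM : ∀ j, |(A *ᵥ a) j| ≤ M) (i : ι) :
    |a i| ≤ Fintype.card ι * (Fintype.card ι)! / |A.det| * M := by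
  have hM0 : 0 ≤ M := (abs_nonneg _).trans (hM i)
  have ha : a = A⁻¹ *ᵥ (A *ᵥ a) := by rw [mulVec_mulVec, nonsing_inv_mul _ hdet, one_mulVec]
  calc |a i| = |∑ j, A⁻¹ i j * (A *ᵥ a) j| :=
        congrArg abs (congrFun ha i)
    _ ≤ ∑ j, |A⁻¹ i j| * |(A *ᵥ a) j| := by
        simpa only [abs_mul] using abs_sum_le_sum_abs (fun j => A⁻¹ i j * (A *ᵥ a) j) univ
    _ ≤ ∑ _j : ι, (Fintype.card ι)! / |A.det| * M := by
        gcongr with j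
        exacts [abs_inv_apply_le hA i j, hM j]
    _ = Fintype.card ι * (Fintype.card ι)! / |A.det| * M := by simp [mul_div_assoc, mul_assoc]

end Matrix

theorem abs_coeff_le_of_separated_nodes {n : ℕ} {δ : ℝ} (hδ0 : 0 < δ) (hδ1 : δ ≤ 1)
    {v : Fin n → ℝ} (hv1 : ∀ j, |v j| ≤ 1) (hv : Pairwise fun i j => δ ≤ |v i - v j|)
    {a : Fin n → ℝ} {M : ℝ} (hM : ∀ j, |∑ k, a k * v j ^ (k : ℕ)| ≤ M) (i : Fin n) :
    |a i| ≤ n * n ! / δ ^ (n ^ 2) * M := by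
  have hdet := pow_sq_le_abs_det_vandermonde hδ0.le hδ1 hv
  have hunit : IsUnit (vandermonde v).det :=
    isUnit_iff_ne_zero.2 (abs_pos.1 ((pow_pos hδ0 _).trans_le hdet))
  have hM' : ∀ j, |(vandermonde v *ᵥ a) j| ≤ M := fun j => by
    simpa [mulVec, dotProduct, vandermonde_apply, mul_comm] using hM j
  have hV1 : ∀ j k, |vandermonde v j k| ≤ 1 := fun j k => by
    rw [vandermonde_apply, abs_pow]
    exact pow_le_one₀ (abs_nonneg _) (hv1 j)
  have hM0 : 0 ≤ M := (abs_nonneg _).trans (hM i)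
  calc |a i| ≤ n * n ! / |(vandermonde v).det| * M := by
        simpa using abs_le_of_abs_mulVec_le hunit hV1 hM' i
    _ ≤ n * n ! / δ ^ (n ^ 2) * M := by gcongr

theorem pow_succ_le_abs_sub_of_geometric {s : ℝ} (hs0 : 0 ≤ s) (hs1 : s ≤ 1) {r : ℕ → ℝ}
    (h0 : r 0 = 0) (hr : ∀ j ≠ 0, 2 * s ^ (j + 1) ≤ |r j| ∧ |r j| ≤ s ^ j) {p q : ℕ}
    (hpq : p < q) : s ^ (q + 1) ≤ |r p - r q| := by
  obtain ⟨hq, hq'⟩ := hr q (by omega)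
  rcases Nat.eq_zero_or_pos p with rfl | hp
  · rw [h0, zero_sub, abs_neg]
    linarith [pow_nonneg hs0 (q + 1)]
  · obtain ⟨hp, -⟩ := hr p hp.ne'
    have hqp : |r q| ≤ s ^ (p + 1) := hq'.trans (pow_le_pow_of_le_one hs0 hs1 hpq)
    have hsq : s ^ (q + 1) ≤ s ^ (p + 1) := pow_le_pow_of_le_one hs0 hs1 (by omega)
    linarith [abs_sub_abs_le_abs_sub (r p) (r q)]

theorem IsUniformlyPerfect.exists_separated_nodes {κ : ℝ} {K : Set ℝ}
    (hK : IsUniformlyPerfect κ K) (hκ0 : 0 < κ) (hκ1 : κ ≤ 1) {x₀ : ℝ} (hx₀ : x₀ ∈ K) (n : ℕ) :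
    ∃ v : Fin n → ℝ, (∀ j, v j ∈ K) ∧ Pairwise fun i j => (κ / 2) ^ n ≤ |v i - v j| := by
  set s := κ / 2 with hs
  have hs0 : 0 < s := by positivity
  have hs1 : s < 1 := by linarith
  have hnode : ∀ j : ℕ, ∃ y ∈ K,
      (j = 0 → y = x₀) ∧ (j ≠ 0 → 2 * s ^ (j + 1) ≤ |y - x₀| ∧ |y - x₀| ≤ s ^ j) := by
    intro j
    rcases eq_or_ne j 0 with rfl | hj
    · exact ⟨x₀, hx₀, fun _ => rfl, fun h => absurd rfl h⟩
    · obtain ⟨y, hyK, hy⟩ := hK (s ^ j) ⟨pow_pos hs0 j, pow_lt_one₀ hs0.le hs1 hj⟩ x₀ hx₀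
      refine ⟨y, hyK, fun h => absurd h hj, fun _ => ?_⟩
      rw [abs_sub_comm, pow_succ, mul_comm _ s, ← mul_assoc, hs, mul_div_cancel₀ _ two_ne_zero]
      exact hy
  choose y hyK hy0 hy using hnode
  refine ⟨fun j => y j, fun j => hyK j, fun i j hij => ?_⟩
  wlog hlt : (i : ℕ) < j generalizing i j
  · rw [abs_sub_comm]
    exact this j i hij.symm (lt_of_le_of_ne (not_lt.1 hlt) (Fin.val_ne_of_ne hij.symm))
  have hsep := pow_succ_le_abs_sub_of_geometric hs0.le hs1.le (r := fun j => y j - x₀)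
    (by simp [hy0]) hy hlt
  calc s ^ n ≤ s ^ ((j : ℕ) + 1) := pow_le_pow_of_le_one hs0.le hs1.le j.isLt
    _ ≤ |y i - y j| := by simpa using hsep

theorem abs_sum_mul_pow_le_ciSup {n : ℕ} {K : Set ℝ} (hK : ∀ z ∈ K, |z| ≤ 1) (a : Fin n → ℝ)
    {z : ℝ} (hz : z ∈ K) :
    |∑ k, a k * z ^ (k : ℕ)| ≤ ⨆ w : K, |∑ k, a k * (w : ℝ) ^ (k : ℕ)| := by
  refine le_ciSup (f := fun w : K => |∑ k, a k * (w : ℝ) ^ (k : ℕ)|) ⟨∑ k, |a k|, ?_⟩ ⟨z, hz⟩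
  rintro _ ⟨w, rfl⟩
  calc |∑ k, a k * (w : ℝ) ^ (k : ℕ)| ≤ ∑ k, |a k| * |(w : ℝ)| ^ (k : ℕ) := by
        simpa only [abs_mul, abs_pow] using
          abs_sum_le_sum_abs (fun k => a k * (w : ℝ) ^ (k : ℕ)) univ
    _ ≤ ∑ k, |a k| := by
        gcongr with k
        exact mul_le_of_le_one_right (abs_nonneg _) (pow_le_one₀ (abs_nonneg _) (hK w w.2))

theorem stmt_8_general (d : ℕ) (κ : ℝ) (hκ : κ ∈ Set.Ioo (0 : ℝ) 1) :
    ∃ c : ℝ, 0 < c ∧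
      ∀ ρ : ℝ, ρ ∈ Set.Ioc (0 : ℝ) 1 → κ < ρ / 100 →
        ∀ K : Set ℝ, K ⊆ Set.Ioo (-ρ) ρ → (0 : ℝ) ∈ K →
          (∀ σ ∈ Set.Ioo (0 : ℝ) 1, ∀ x ∈ K, ∃ y ∈ K, κ * σ ≤ |x - y| ∧ |x - y| ≤ σ) →
          ∀ a : Fin (d + 1) → ℝ, ∀ i : Fin (d + 1),
            |a i| ≤ c * ⨆ z : K, |∑ k : Fin (d + 1), a k * (z : ℝ) ^ (k : ℕ)| := by
  obtain ⟨hκ0, hκ1⟩ := hκ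
  have hδ0 : 0 < (κ / 2) ^ (d + 1) := by positivity
  refine ⟨(d + 1 : ℕ) * (d + 1)! / ((κ / 2) ^ (d + 1)) ^ ((d + 1) ^ 2), by positivity, ?_⟩
  intro ρ hρ _ K hKρ h0 hK a i
  have hK1 : ∀ z ∈ K, |z| ≤ 1 := fun z hz =>
    (abs_lt.2 (hKρ hz) : |z| < ρ).le.trans hρ.2
  obtain ⟨v, hvK, hv⟩ :=
    IsUniformlyPerfect.exists_separated_nodes hK hκ0 hκ1.le h0 (d + 1)
  exact abs_coeff_le_of_separated_nodes hδ0 (pow_le_one₀ (by positivity) (by linarith))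
    (fun j => hK1 _ (hvK j)) hv (fun j => abs_sum_mul_pow_le_ciSup hK1 a (hvK j)) i

/-- Coefficient bound from values on a uniformly perfect set: for every `d ≥ 1` and
`κ ∈ (0,1)` there exists `c > 0` such that for every `ρ ∈ (0,1]` with `κ < ρ/100`,
every `κ`-uniformly perfect set `K ⊆ (-ρ,ρ)` containing `0`, and every polynomial
`P(z) = Σ_{k ≤ d} a_k z^k`, one has `max_k |a_k| ≤ c · sup_{z ∈ K} |P(z)|`. -/
theorem stmt_8 (d : ℕ) (hd : 1 ≤ d) (κ : ℝ) (hκ : κ ∈ Set.Ioo (0 : ℝ) 1) :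
    ∃ c : ℝ, 0 < c ∧
      ∀ ρ : ℝ, ρ ∈ Set.Ioc (0 : ℝ) 1 → κ < ρ / 100 →
        ∀ K : Set ℝ, K ⊆ Set.Ioo (-ρ) ρ → (0 : ℝ) ∈ K →
          (∀ σ ∈ Set.Ioo (0 : ℝ) 1, ∀ x ∈ K, ∃ y ∈ K, κ * σ ≤ |x - y| ∧ |x - y| ≤ σ) →
          ∀ a : Fin (d + 1) → ℝ, ∀ i : Fin (d + 1),
            |a i| ≤ c * ⨆ z : K, |∑ k : Fin (d + 1), a k * (z : ℝ) ^ (k : ℕ)| :=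
  stmt_8_general d κ hκ
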